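/- Let G be a group with a choice of generators w ↦ w̄ from W such that the word metric on G satisfies the four-point condition with constant δ ≥ 0. Let κ > 0 and let g_1, …, g_k be elements of G such that d(g_i^e, g_j^f) ≥ κ + 2δ + max(|g_i|, |g_j|) for all 1 ≤ i, j ≤ k and e, f ∈ {+1, −1} except when i = j and e = f. Then for every freely reduced word g_{i_1}^{e_1} ⋯ g_{i_t}^{e_t} (a nonempty sequence of pairs (i_ℓ, e_ℓ) with no ℓ such that i_ℓ = i_{ℓ+1} and e_ℓ = −e_{ℓ+1}), one has |g_{i_1}^{e_1} ⋯ g_{i_t}^{e_t}| ≥ t·κ > 0; in particular g_1, …, g_k freely generate a free subgroup of rank k of G, i.e., the homomorphism from the free group on k generators to G sending the i-th free generator to g_i is injective. -/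

import Mathlib

open Filter

namespace GenericSubgroups

/-- A word over the alphabet `Fin m × Bool` (generator index, with `true` = formal inverse). -/
abbrev Word (m : ℕ) := List (Fin m × Bool)

/-- The disk of radius `n` : words of length at most `n`. -/
def ball (m n : ℕ) : Set (Word m) := {w | w.length ≤ n}

/-- The sphere of radius `n` : words of length exactly `n`. -/
def sphere (m n : ℕ) : Set (Word m) := {w | w.length = n}

/-- A set of words is exponentially negligible. -/
def ExpNegligible {m : ℕ} (X : Set (Word m)) : Prop :=
  ∃ α : ℝ, 0 < α ∧ α < 1 ∧
    ∀ᶠ n in atTop, ((X ∩ ball m n).ncard : ℝ) / ((ball m n).ncard : ℝ) ≤ α ^ n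

/-- A set of words is exponentially generic if its complement is exponentially negligible. -/
def ExpGeneric {m : ℕ} (X : Set (Word m)) : Prop := ExpNegligible Xᶜ

/-- Disk of radius `n` in the set of `k`-tuples of words. -/
def ballK (m k n : ℕ) : Set (Fin k → Word m) := {w | ∀ i, (w i).length ≤ n}

def ExpNegligibleK {m k : ℕ} (X : Set (Fin k → Word m)) : Prop :=
  ∃ α : ℝ, 0 < α ∧ α < 1 ∧
    ∀ᶠ n in atTop, ((X ∩ ballK m k n).ncard : ℝ) / ((ballK m k n).ncard : ℝ) ≤ α ^ n

def ExpGenericK {m k : ℕ} (X : Set (Fin k → Word m)) : Prop := ExpNegligibleK Xᶜ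

variable {G : Type*} [Group G]

/-- Evaluation of a word in `G`, determined by the family `g` of generators. -/
def eval {m : ℕ} (g : Fin m → G) (w : Word m) : G :=
  (w.map (fun p => if p.2 then (g p.1)⁻¹ else g p.1)).prod

/-- Word length of an element of `G`. -/
noncomputable def wlen {m : ℕ} (g : Fin m → G) (x : G) : ℕ :=
  sInf {n | ∃ w : Word m, w.length = n ∧ eval g w = x}

/-- Word metric on `G`. -/
noncomputable def wdist {m : ℕ} (g : Fin m → G) (x y : G) : ℕ := wlen g (x⁻¹ * y)

/-- Words of length exactly `n` representing the identity. -/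
def V {m : ℕ} (g : Fin m → G) (n : ℕ) : Set (Word m) :=
  {w | w.length = n ∧ eval g w = 1}

/-- The gross cogrowth `θ = limsup (1/n) log_{2m} |V_n|`. -/
noncomputable def cogrowth {m : ℕ} (g : Fin m → G) : ℝ :=
  limsup (fun n : ℕ => Real.logb (2 * m : ℝ) ((V g n).ncard : ℝ) / (n : ℝ)) atTop

/-- The four-point (quadrilateral) condition with constant `δ` for the word metric. -/
def FourPoint {m : ℕ} (g : Fin m → G) (δ : ℝ) : Prop :=
  ∀ p q r s : G,
    (wdist g p s : ℝ) + (wdist g q r : ℝ) ≤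
      2 * δ + max ((wdist g p q : ℝ) + (wdist g r s : ℝ)) ((wdist g p r : ℝ) + (wdist g q s : ℝ))

/-- The Gromov product `(x|y)_1` with respect to the word metric. -/
noncomputable def gp {m : ℕ} (g : Fin m → G) (x y : G) : ℝ :=
  ((wlen g x : ℝ) + (wlen g y : ℝ) - (wlen g (x⁻¹ * y) : ℝ)) / 2

/-- `x^e` where `e : Bool`, `true` meaning inverse. -/
def powB (x : G) (e : Bool) : G := if e then x⁻¹ else x

/-- Formal inverse of a word. -/
def winv {m : ℕ} (w : Word m) : Word m := (w.reverse).map (fun p => (p.1, !p.2))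

/-! Follow the prefixes `x₀ = 1, x₁, …, x_t` of the product. The four-point condition on
`1, x_{ℓ+2}, x_ℓ, x_{ℓ+1}` bounds `|x_{ℓ+1}| + d(x_ℓ, x_{ℓ+2})` by `2δ` plus the larger of
`|x_{ℓ+2}| + |g_{i_{ℓ+1}}|` and `|x_ℓ| + |g_{i_{ℓ+2}}|`. Separation of consecutive letters makes
`d(x_ℓ, x_{ℓ+2})` so large that the second alternative contradicts the inductive bound
`|x_{ℓ+1}| ≥ |x_ℓ| + κ`, and the first gives `|x_{ℓ+2}| ≥ |x_{ℓ+1}| + κ`. So lengths grow by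
`κ` per letter, and a nontrivial element of the free group, being a nonempty reduced word, is
not sent to `1`. -/

section WordLength

variable {m : ℕ} (g : Fin m → G)

@[simp]
lemma eval_nil : eval g ([] : Word m) = 1 := by simp [eval]

lemma eval_append (w₁ w₂ : Word m) : eval g (w₁ ++ w₂) = eval g w₁ * eval g w₂ := by
  simp [eval]

lemma eval_winv (w : Word m) : eval g (winv w) = (eval g w)⁻¹ := by
  induction w with
  | nil => simp [winv]
  | cons p w ih =>
    have hw : winv (p :: w) = winv w ++ [(p.1, !p.2)] := by simp [winv]
    rw [hw, eval_append, ih]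
    cases hb : p.2 <;> simp [eval, hb]

@[simp]
lemma length_winv (w : Word m) : (winv w).length = w.length := by simp [winv]

lemma wlen_le_length {x : G} (w : Word m) (hw : eval g w = x) : wlen g x ≤ w.length :=
  Nat.sInf_le ⟨w, rfl, hw⟩

lemma exists_length_eq_wlen (hsurj : Function.Surjective (eval g)) (x : G) :
    ∃ w : Word m, w.length = wlen g x ∧ eval g w = x := by
  obtain ⟨w, hw⟩ := hsurj x
  exact Nat.sInf_mem (s := {n | ∃ w : Word m, w.length = n ∧ eval g w = x})
    ⟨w.length, w, rfl, hw⟩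

@[simp]
lemma wlen_one : wlen g (1 : G) = 0 :=
  Nat.le_zero.mp (wlen_le_length g [] (eval_nil g))

@[simp]
lemma wlen_inv (x : G) : wlen g x⁻¹ = wlen g x := by
  unfold wlen
  congr 1
  ext n
  constructor <;> rintro ⟨w, rfl, hw⟩
  · exact ⟨winv w, length_winv w, by rw [eval_winv, hw, inv_inv]⟩
  · exact ⟨winv w, length_winv w, by rw [eval_winv, hw]⟩

lemma wlen_mul_le (hsurj : Function.Surjective (eval g)) (x y : G) :
    wlen g (x * y) ≤ wlen g x + wlen g y := by
  obtain ⟨u, hu, rfl⟩ := exists_length_eq_wlen g hsurj x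
  obtain ⟨v, hv, rfl⟩ := exists_length_eq_wlen g hsurj y
  rw [← hu, ← hv, ← List.length_append, ← eval_append]
  exact wlen_le_length g _ rfl

@[simp]
lemma wlen_powB (x : G) (e : Bool) : wlen g (powB x e) = wlen g x := by
  cases e <;> simp [powB]

@[simp]
lemma inv_powB_not (x : G) (e : Bool) : (powB x !e)⁻¹ = powB x e := by
  cases e <;> simp [powB]

lemma wdist_comm (x y : G) : wdist g x y = wdist g y x := by
  rw [wdist, wdist, ← wlen_inv, mul_inv_rev, inv_inv]

@[simp]
lemma wdist_one_left (x : G) : wdist g 1 x = wlen g x := by simp [wdist]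

@[simp]
lemma wdist_mul_right_self (x y : G) : wdist g x (x * y) = wlen g y := by simp [wdist]

end WordLength

section FourPoint

variable {m : ℕ} (g : Fin m → G)

/-- Since `d(y⁻¹, z) = |y z|`, for consecutive letters `y = g_i^e`, `z = g_j^f` this is the
separation hypothesis on `g_i^(-e)` and `g_j^f`. -/
def Separated (κ δ : ℝ) (y z : G) : Prop :=
  κ + 2 * δ + max (wlen g y : ℝ) (wlen g z) ≤ wlen g (y * z)

variable {g} {δ κ : ℝ}

lemma FourPoint.wlen_mul_add_le_wlen_mul_mul (h4 : FourPoint g δ) (hκ : 0 < κ) {x y z : G}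
    (hyz : Separated g κ δ y z) (hxy : (wlen g x : ℝ) + κ ≤ wlen g (x * y)) :
    (wlen g (x * y) : ℝ) + κ ≤ wlen g (x * y * z) := by
  have H := h4 1 (x * y * z) x (x * y)
  have hd₁ : wdist g (x * y * z) x = wlen g (y * z) := by
    rw [wdist_comm, mul_assoc, wdist_mul_right_self]
  have hd₂ : wdist g (x * y * z) (x * y) = wlen g z := by
    rw [wdist_comm, wdist_mul_right_self]
  simp only [wdist_one_left, wdist_mul_right_self, hd₁, hd₂] at H
  have hy : (wlen g y : ℝ) ≤ max (wlen g y : ℝ) (wlen g z) := le_max_left _ _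
  have hz : (wlen g z : ℝ) ≤ max (wlen g y : ℝ) (wlen g z) := le_max_right _ _
  unfold Separated at hyz
  rcases max_choice ((wlen g (x * y * z) : ℝ) + wlen g y) (wlen g x + wlen g z) with hM | hM <;>
    rw [hM] at H <;> linarith

lemma FourPoint.wlen_mul_add_length_mul_le (h4 : FourPoint g δ) (hκ : 0 < κ) :
    ∀ {x y : G} {l : List G}, (y :: l).IsChain (Separated g κ δ) →
      (wlen g x : ℝ) + κ ≤ wlen g (x * y) →
      (wlen g (x * y) : ℝ) + l.length * κ ≤ wlen g (x * (y :: l).prod)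
  | x, y, [], _, _ => by simp
  | x, y, z :: l, hl, hxy => by
    rw [List.isChain_cons_cons] at hl
    have hstep := h4.wlen_mul_add_le_wlen_mul_mul hκ hl.1 hxy
    have ih := h4.wlen_mul_add_length_mul_le hκ hl.2 hstep
    simp only [List.prod_cons, List.length_cons, ← mul_assoc] at ih ⊢
    push_cast
    linarith

theorem FourPoint.length_mul_le_wlen_prod (h4 : FourPoint g δ) (hκ : 0 < κ) {l : List G}
    (hl : l.IsChain (Separated g κ δ)) (hlong : ∀ y ∈ l, κ ≤ wlen g y) :
    (l.length : ℝ) * κ ≤ wlen g l.prod := by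
  cases l with
  | nil => simp
  | cons y l =>
    have hy := hlong y List.mem_cons_self
    have h := h4.wlen_mul_add_length_mul_le hκ (x := 1) hl (by simpa using hy)
    simp only [one_mul] at h
    simp only [List.length_cons]
    push_cast
    linarith

end FourPoint

lemma isReduced_map_not {α : Type*} {L : List (α × Bool)} (hL : FreeGroup.IsReduced L) :
    FreeGroup.IsReduced (L.map fun p => (p.1, !p.2)) :=
  List.isChain_map_of_isChain _ (fun _ _ h he => by simpa using h he) hL

/-- Mathlib's `FreeGroup` marks the inverse of a generator by `false`, `powB` by `true`. -/
lemma lift_eq_prod_powB {α : Type*} [DecidableEq α] (a : α → G) (w : FreeGroup α) :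
    FreeGroup.lift a w =
      ((w.toWord.map fun p => (p.1, !p.2)).map fun p => powB (a p.1) p.2).prod := by
  conv_lhs => rw [← FreeGroup.mk_toWord (x := w)]
  rw [FreeGroup.lift_mk, List.map_map]
  congr 1
  refine List.map_congr_left fun ⟨i, e⟩ _ => ?_
  cases e <;> simp [powB]

theorem free_basis_of_separated_general (m k : ℕ) {G : Type*} [Group G]
    (g : Fin m → G) (hsurj : Function.Surjective (eval g))
    (δ : ℝ) (hδ : 0 ≤ δ) (h4 : FourPoint g δ)
    (κ : ℝ) (hκ : 0 < κ) (a : Fin k → G)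
    (h : ∀ i j : Fin k, ∀ e f : Bool, ¬(i = j ∧ e = f) →
      κ + 2 * δ + (max (wlen g (a i)) (wlen g (a j)) : ℝ)
        ≤ (wdist g (powB (a i) e) (powB (a j) f) : ℝ)) :
    (∀ L : List (Fin k × Bool), L ≠ [] →
      (∀ (u v : List (Fin k × Bool)) (p q : Fin k × Bool),
        L = u ++ p :: q :: v → ¬(p.1 = q.1 ∧ p.2 ≠ q.2)) →
      (L.length : ℝ) * κ ≤ (wlen g ((L.map fun p => powB (a p.1) p.2).prod) : ℝ) ∧
        0 < (L.length : ℝ) * κ) ∧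
    Function.Injective (FreeGroup.lift a : FreeGroup (Fin k) →* G) := by
  set φ : Fin k × Bool → G := fun p => powB (a p.1) p.2
  have hlong : ∀ p, κ ≤ wlen g (φ p) := fun p => by
    have hsq : κ + 2 * δ + wlen g (a p.1) ≤ wlen g (a p.1 * a p.1) := by
      simpa [wdist, powB] using h p.1 p.1 true false (by simp)
    have hsub : (wlen g (a p.1 * a p.1) : ℝ) ≤ wlen g (a p.1) + wlen g (a p.1) := by
      exact_mod_cast wlen_mul_le g hsurj (a p.1) (a p.1)
    simp only [φ, wlen_powB]
    linarith
  have hsep : ∀ p q : Fin k × Bool, (p.1 = q.1 → p.2 = q.2) → Separated g κ δ (φ p) (φ q) :=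
    fun p q hpq => by
      have hne : ¬(p.1 = q.1 ∧ (!p.2) = q.2) := fun ⟨h₁, h₂⟩ => by simpa [← h₂] using hpq h₁
      simpa [Separated, φ, wdist] using h p.1 q.1 (!p.2) q.2 hne
  have key : ∀ L, FreeGroup.IsReduced L → (L.length : ℝ) * κ ≤ wlen g (L.map φ).prod :=
    fun L hL => by
      simpa using h4.length_mul_le_wlen_prod hκ (List.isChain_map_of_isChain φ hsep hL)
        (List.forall_mem_map.2 fun p _ => hlong p)
  refine ⟨fun L hL hred =>
    ⟨key L ?_, mul_pos (Nat.cast_pos.2 (List.length_pos_iff.2 hL)) hκ⟩, ?_⟩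
  · refine List.isChain_iff_forall_rel_of_append_cons_cons.2 fun p q u v he h₁ => ?_
    simpa [h₁] using hred u v p q he
  · refine (injective_iff_map_eq_one _).2 fun w hw => ?_
    have hbound := key _ (isReduced_map_not (FreeGroup.isReduced_toWord (x := w)))
    rw [← lift_eq_prod_powB, hw, wlen_one] at hbound
    have hlen : (w.toWord.length : ℝ) ≤ 0 :=
      nonpos_of_mul_nonpos_left (by simpa using hbound) hκ
    simpa using hlen

/-- if `d(g_i^e, g_j^f) ≥ κ + 2δ + max(|g_i|, |g_j|)` for all `i, j` and
signs `e, f` except when `i = j` and `e = f`, then every freely reduced word of length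
`t` in `g₁, …, g_k` has word length at least `tκ > 0`; in particular `g₁, …, g_k`
freely generate a free subgroup of rank `k`. -/
theorem free_basis_of_separated (m k : ℕ) (hm : 2 ≤ m) {G : Type*} [Group G]
    (g : Fin m → G) (hsurj : Function.Surjective (eval g))
    (δ : ℝ) (hδ : 0 ≤ δ) (h4 : FourPoint g δ)
    (κ : ℝ) (hκ : 0 < κ) (a : Fin k → G)
    (h : ∀ i j : Fin k, ∀ e f : Bool, ¬(i = j ∧ e = f) →
      κ + 2 * δ + (max (wlen g (a i)) (wlen g (a j)) : ℝ)
        ≤ (wdist g (powB (a i) e) (powB (a j) f) : ℝ)) :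
    (∀ L : List (Fin k × Bool), L ≠ [] →
      (∀ (u v : List (Fin k × Bool)) (p q : Fin k × Bool),
        L = u ++ p :: q :: v → ¬(p.1 = q.1 ∧ p.2 ≠ q.2)) →
      (L.length : ℝ) * κ ≤ (wlen g ((L.map fun p => powB (a p.1) p.2).prod) : ℝ) ∧
        0 < (L.length : ℝ) * κ) ∧
    Function.Injective (FreeGroup.lift a : FreeGroup (Fin k) →* G) :=
  free_basis_of_separated_general m k g hsurj δ hδ h4 κ hκ a h
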